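/- If H is a finite connected graph and n is an integer with n ≥ mp(H), then the monophonic position number of the Cartesian product of the complete graph K_n with H equals n, i.e. mp(K_n □ H) = n. -/

import Mathlib

open SimpleGraph

/-- A walk is *monophonic* if it is an induced path: it is a path and the only
edges of the graph between vertices of the walk are the edges of the walk. -/
def SimpleGraph.Walk.IsMonophonic {V : Type*} {G : SimpleGraph V} {u v : V}
    (p : G.Walk u v) : Prop :=
  p.IsPath ∧ ∀ a b : V, a ∈ p.support → b ∈ p.support → G.Adj a b → p.toSubgraph.Adj a b

/-- A set `S` is a *monophonic position set* if no monophonic path contains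
more than two vertices of `S`. -/
def SimpleGraph.IsMPSet {V : Type*} (G : SimpleGraph V) (S : Set V) : Prop :=
  ∀ ⦃u v : V⦄ (p : G.Walk u v), p.IsMonophonic → ({x ∈ S | x ∈ p.support}).ncard ≤ 2

/-- The *monophonic position number*: the largest cardinality of a monophonic
position set. -/
noncomputable def SimpleGraph.mpNum {V : Type*} (G : SimpleGraph V) : ℕ :=
  sSup {n | ∃ S : Set V, G.IsMPSet S ∧ S.ncard = n}

/-!
A fibre `Kₙ × {b}` is a clique, and a monophonic path meets a clique in at most two vertices
(its endpoints would be adjacent), so `n ≤ mp(Kₙ □ H)`.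

Conversely let `S` be a monophonic position set of `Kₙ □ H`. A monophonic path `r` of `H` from
`x` to `z` lifts, for any layers `i, j, l`, to the monophonic path
`(i, x) → (j, x) ⋯ (j, z) → (l, z)` that follows `r` in the layer `{j} × H` (a hop is omitted
when `i = j` or `l = j`; when both are present, `(i, x)` and `(l, z)` must be distinct and
non-adjacent). Hence if two vertices of `S` lie in one fibre `Kₙ × {a}`, then all of `S` does
(`H` being connected), and otherwise `S` projects injectively onto a monophonic position set of
`H`, of size at most `mp(H) ≤ n`.
-/

namespace SimpleGraph

section Monophonic

variable {V V' : Type*} {G : SimpleGraph V} {G' : SimpleGraph V'}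

namespace Walk

variable {u v w : V}

theorem isMonophonic_iff {p : G.Walk u v} :
    p.IsMonophonic ↔
      p.IsPath ∧ ∀ a b, a ∈ p.support → b ∈ p.support → G.Adj a b → s(a, b) ∈ p.edges := by
  simp only [IsMonophonic, adj_toSubgraph_iff_mem_edges]

theorem IsMonophonic.reverse {p : G.Walk u v} (hp : p.IsMonophonic) : p.reverse.IsMonophonic := by
  rw [isMonophonic_iff] at hp ⊢
  simpa [support_reverse, edges_reverse] using hp

theorem IsMonophonic.cons {q : G.Walk v w} (hq : q.IsMonophonic) (h : G.Adj u v)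
    (hu : u ∉ q.support) (hnbr : ∀ t ∈ q.support, G.Adj u t → t = v) :
    (q.cons h).IsMonophonic := by
  rw [isMonophonic_iff] at hq ⊢
  refine ⟨(cons_isPath_iff h q).2 ⟨hq.1, hu⟩, fun a b ha hb hab => ?_⟩
  simp only [support_cons, List.mem_cons, edges_cons] at ha hb ⊢
  rcases ha with rfl | ha <;> rcases hb with rfl | hb
  · exact absurd rfl hab.ne
  · simp [hnbr b hb hab]
  · simp [hnbr a ha hab.symm, Sym2.eq_swap]
  · exact .inr (hq.2 a b ha hb hab)

theorem IsMonophonic.of_cons {q : G.Walk v w} {h : G.Adj u v} (hp : (q.cons h).IsMonophonic) :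
    q.IsMonophonic := by
  rw [isMonophonic_iff] at hp ⊢
  have hu : u ∉ q.support := ((cons_isPath_iff h q).1 hp.1).2
  refine ⟨hp.1.of_cons, fun a b ha hb hab => ?_⟩
  have := hp.2 a b (List.mem_cons_of_mem _ ha) (List.mem_cons_of_mem _ hb) hab
  rw [edges_cons, List.mem_cons, Sym2.eq_iff] at this
  rcases this with (⟨rfl, -⟩ | ⟨-, rfl⟩) | h
  · exact absurd ha hu
  · exact absurd hb hu
  · exact h

theorem IsMonophonic.map {p : G.Walk u v} (hp : p.IsMonophonic) (f : G ↪g G') :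
    (p.map f.toHom).IsMonophonic := by
  rw [isMonophonic_iff] at hp ⊢
  refine ⟨IsPath.map f.injective hp.1, fun a b ha hb hab => ?_⟩
  simp only [support_map, List.mem_map] at ha hb
  obtain ⟨a, ha, rfl⟩ := ha
  obtain ⟨b, hb, rfl⟩ := hb
  rw [edges_map]
  exact List.mem_map_of_mem (hp.2 a b ha hb (f.map_adj_iff.1 hab))

theorem IsPath.ne_of_mem_support {p : G.Walk u v} (hp : p.IsPath) {y : V} (hy : y ∈ p.support)
    (hyu : y ≠ u) : u ≠ v := by
  rintro rfl
  rw [nil_iff_support_eq.1 (isPath_iff_nil.1 hp), List.mem_singleton] at hy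
  exact hyu hy

theorem IsMonophonic.not_adj_of_mem_support {p : G.Walk u v} (hp : p.IsMonophonic) {y : V}
    (hy : y ∈ p.support) (hyu : y ≠ u) (hyv : y ≠ v) : ¬ G.Adj u v := by
  intro huv
  rw [isMonophonic_iff] at hp
  have hlen := hp.1.length_eq_one_of_mem_edges (hp.2 u v p.start_mem_support p.end_mem_support huv)
  rw [eq_of_length_le_one hlen.le huv.length_toWalk.le] at hy
  simp_all

theorem exists_isSubwalk_of_mem_support {p : G.Walk u v} {a b : V} (ha : a ∈ p.support)
    (hb : b ∈ p.support) :
    (∃ q : G.Walk a b, q.IsSubwalk p) ∨ ∃ q : G.Walk b a, q.IsSubwalk p := by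
  classical
  rw [← p.take_spec ha, mem_support_append_iff] at hb
  rcases hb with hb | hb
  · exact .inr ⟨_, (isSubwalk_dropUntil _ hb).trans (isSubwalk_takeUntil p ha)⟩
  · exact .inl ⟨_, (isSubwalk_takeUntil _ hb).trans (isSubwalk_dropUntil p ha)⟩

/-- The subwalk between the ends of a chord would again be shortest, hence a single edge. -/
theorem isMonophonic_of_length_eq_dist {p : G.Walk u v} (hp : p.length = G.dist u v) :
    p.IsMonophonic := by
  refine isMonophonic_iff.2 ⟨p.isPath_of_length_eq_dist hp, fun a b ha hb hab => ?_⟩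
  rw [← isSubwalk_toWalk_iff_mem_edges hab]
  rcases exists_isSubwalk_of_mem_support ha hb with ⟨q, hq⟩ | ⟨q, hq⟩
  · have hlen : q.length = 1 := (length_eq_dist_of_subwalk hp hq).trans (dist_eq_one_iff_adj.2 hab)
    exact .inl (eq_of_length_le_one (p := q) hlen.le hab.length_toWalk.le ▸ hq)
  · have hlen : q.length = 1 :=
      (length_eq_dist_of_subwalk hp hq).trans (dist_eq_one_iff_adj.2 hab.symm)
    exact .inr (eq_of_length_le_one (p := q) hlen.le hab.symm.length_toWalk.le ▸ hq)

theorem IsMonophonic.exists_suffix_start_mem {p : G.Walk u v} (hp : p.IsMonophonic) {T : Set V}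
    (hT : ∃ t ∈ T, t ∈ p.support) :
    ∃ u' ∈ T, ∃ q : G.Walk u' v, q.IsMonophonic ∧
      {x ∈ T | x ∈ q.support} = {x ∈ T | x ∈ p.support} := by
  induction p with
  | nil =>
    obtain ⟨t, ht, htu⟩ := hT
    rw [support_nil, List.mem_singleton] at htu
    exact ⟨_, htu ▸ ht, nil, hp, rfl⟩
  | @cons u x v h q ih =>
    by_cases hu : u ∈ T
    · exact ⟨u, hu, _, hp, rfl⟩
    have hTq : {x ∈ T | x ∈ q.support} = {x ∈ T | x ∈ (q.cons h).support} := by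
      ext t
      simp only [support_cons, List.mem_cons, Set.mem_ofPred_eq]
      grind
    obtain ⟨u', hu', r, hr, hrT⟩ := ih hp.of_cons (by
      obtain ⟨t, ht, htp⟩ := hT
      rw [support_cons, List.mem_cons] at htp
      exact ⟨t, ht, htp.resolve_left (by rintro rfl; exact hu ht)⟩)
    exact ⟨u', hu', r, hr, hrT.trans hTq⟩

end Walk

theorem Reachable.exists_isMonophonic {u v : V} (h : G.Reachable u v) :
    ∃ p : G.Walk u v, p.IsMonophonic := by
  obtain ⟨p, hp⟩ := h.exists_walk_length_eq_dist
  exact ⟨p, Walk.isMonophonic_of_length_eq_dist hp⟩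

theorem isMPSet_iff_forall_isMonophonic {T : Set V} :
    G.IsMPSet T ↔ ∀ ⦃x z : V⦄ (q : G.Walk x z), q.IsMonophonic → x ∈ T → z ∈ T →
      ∀ y ∈ T, y ∈ q.support → y = x ∨ y = z := by
  constructor
  · intro hT x z q hq hx hz y hy hyq
    by_contra! hne
    have hxz := hq.1.ne_of_mem_support hyq hne.1
    have hsub : ({x, y, z} : Set V) ⊆ {t ∈ T | t ∈ q.support} := by
      rintro t (rfl | rfl | rfl)
      exacts [⟨hx, q.start_mem_support⟩, ⟨hy, hyq⟩, ⟨hz, q.end_mem_support⟩]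
    have h3 := Set.ncard_le_ncard hsub (q.support.finite_toSet.subset fun t ht => ht.2)
    rw [Set.ncard_eq_three.2 ⟨x, y, z, hne.1.symm, hxz, hne.2, rfl⟩] at h3
    have := hT q hq
    omega
  · intro hT u v p hp
    by_contra! hgt
    obtain ⟨t, ht, htp⟩ := Set.nonempty_of_ncard_ne_zero (Nat.ne_zero_of_lt hgt)
    obtain ⟨u', hu', q, hq, hqT⟩ := hp.exists_suffix_start_mem ⟨t, ht, htp⟩
    obtain ⟨v', hv', r, hr, hrT⟩ :=
      hq.reverse.exists_suffix_start_mem ⟨u', hu', q.reverse.end_mem_support⟩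
    have hrp : {x ∈ T | x ∈ r.support} = {x ∈ T | x ∈ p.support} := by
      rw [hrT, ← hqT]
      simp only [Walk.support_reverse, List.mem_reverse]
    obtain ⟨y, ⟨hyT, hyr⟩, hy⟩ := Set.exists_mem_notMem_of_ncard_lt_ncard
      (s := {v', u'}) (t := {x ∈ T | x ∈ r.support})
      (by rw [hrp]; exact (Set.ncard_insert_le _ _).trans_lt (by simpa using hgt))
    rcases hT r hr hv' hu' y hyT hyr with rfl | rfl <;> simp at hy

theorem IsClique.isMPSet {T : Set V} (hT : G.IsClique T) : G.IsMPSet T := by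
  rw [isMPSet_iff_forall_isMonophonic]
  intro x z q hq hx hz y _ hyq
  by_contra! hne
  exact hq.not_adj_of_mem_support hyq hne.1 hne.2
    (hT hx hz (hq.1.ne_of_mem_support hyq hne.1))

theorem IsMPSet.ncard_le_mpNum [Finite V] {S : Set V} (hS : G.IsMPSet S) :
    S.ncard ≤ G.mpNum :=
  le_csSup ⟨Nat.card V, by rintro _ ⟨T, -, rfl⟩; exact T.ncard_le_card⟩ ⟨S, hS, rfl⟩

end Monophonic

section BoxProd

variable {α β : Type*} {H : SimpleGraph β}

theorem Walk.mem_support_boxProdRight (G : SimpleGraph α) (a : α) {x z : β} {r : H.Walk x z}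
    {t : α × β} : t ∈ (r.boxProdRight G a).support ↔ t.1 = a ∧ t.2 ∈ r.support := by
  have hsupp : (r.boxProdRight G a).support = (r.map (G.boxProdRight H a).toHom).support := rfl
  rw [hsupp, support_map, List.mem_map]
  constructor
  · rintro ⟨s, hs, rfl⟩
    exact ⟨rfl, hs⟩
  · rintro ⟨rfl, ht⟩
    exact ⟨t.2, ht, rfl⟩

theorem Walk.IsMonophonic.boxProdRight {x z : β} {r : H.Walk x z} (hr : r.IsMonophonic)
    (G : SimpleGraph α) (a : α) : (r.boxProdRight G a).IsMonophonic :=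
  hr.map (G.boxProdRight H a)

theorem Walk.IsMonophonic.exists_top_boxProd_cons {k : α} {x : β} {v : α × β}
    {W : ((⊤ : SimpleGraph α) □ H).Walk (k, x) v} (hW : W.IsMonophonic) (i : α)
    (hfree : i ≠ k → ∀ t ∈ W.support,
      t.1 = k ∨ t ≠ (i, x) ∧ ¬ ((⊤ : SimpleGraph α) □ H).Adj (i, x) t) :
    ∃ W' : ((⊤ : SimpleGraph α) □ H).Walk (i, x) v, W'.IsMonophonic ∧
      ∀ t, t ∈ W'.support ↔ t = (i, x) ∨ t ∈ W.support := by
  by_cases hik : i = k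
  · subst hik
    exact ⟨W, hW, fun t => ⟨.inr, by rintro (rfl | ht); exacts [W.start_mem_support, ht]⟩⟩
  refine ⟨W.cons (boxProd_adj_left.2 ((top_adj i k).2 hik)), hW.cons _ ?_ ?_, by simp⟩
  · intro hmem
    rcases hfree hik _ hmem with h | h
    exacts [hik h, h.1 rfl]
  · rintro ⟨l, y⟩ ht hadj
    rcases hfree hik _ ht with rfl | h
    · simp_all [boxProd_adj]
    · exact absurd hadj h.2

theorem Walk.IsMonophonic.exists_top_boxProd_lift {x z : β} {r : H.Walk x z}
    (hr : r.IsMonophonic) (i j l : α)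
    (hil : i ≠ j → l ≠ j → (i, x) ≠ (l, z) ∧ ¬ ((⊤ : SimpleGraph α) □ H).Adj (i, x) (l, z)) :
    ∃ W : ((⊤ : SimpleGraph α) □ H).Walk (i, x) (l, z), W.IsMonophonic ∧
      ∀ y ∈ r.support, (j, y) ∈ W.support := by
  have hlayer (t) (ht : t ∈ (r.boxProdRight ⊤ j).support) : t.1 = j :=
    ((mem_support_boxProdRight ⊤ j).1 ht).1
  obtain ⟨W₁, hW₁, hW₁s⟩ := (hr.boxProdRight ⊤ j).exists_top_boxProd_cons i
    fun _ t ht => .inl (hlayer t ht)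
  obtain ⟨W₂, hW₂, hW₂s⟩ := hW₁.reverse.exists_top_boxProd_cons l fun hlj t ht => by
    rw [support_reverse, List.mem_reverse, hW₁s] at ht
    rcases ht with rfl | ht
    · by_cases hij : i = j
      · exact .inl hij
      · exact .inr ⟨(hil hij hlj).1, fun h => (hil hij hlj).2 h.symm⟩
    · exact .inl (hlayer t ht)
  refine ⟨W₂.reverse, hW₂.reverse, fun y hy => ?_⟩
  simp [hW₂s, hW₁s, mem_support_boxProdRight, hy]

variable {S : Set (α × β)}

theorem IsMPSet.snd_eq_of_top_boxProd (hH : H.Preconnected)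
    (hS : ((⊤ : SimpleGraph α) □ H).IsMPSet S) {i j : α} {a : β} (hij : i ≠ j)
    (hi : (i, a) ∈ S) (hj : (j, a) ∈ S) {p : α × β} (hp : p ∈ S) : p.2 = a := by
  obtain ⟨l, c⟩ := p
  by_contra hca
  wlog hli : l ≠ i generalizing i j
  · exact this hij.symm hj hi (not_not.1 hli ▸ hij)
  obtain ⟨r, hr⟩ := (hH a c).exists_isMonophonic
  obtain ⟨W, hW, hjW⟩ := hr.exists_top_boxProd_lift i j l fun _ _ =>
    ⟨fun h => hca (congrArg Prod.snd h).symm, by simp [boxProd_adj, Ne.symm hli, Ne.symm hca]⟩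
  rcases isMPSet_iff_forall_isMonophonic.1 hS W hW hi hp (j, a) hj
    (hjW a r.start_mem_support) with h | h
  · exact hij (congrArg Prod.fst h).symm
  · exact hca (congrArg Prod.snd h).symm

theorem IsMPSet.image_snd_of_top_boxProd (hS : ((⊤ : SimpleGraph α) □ H).IsMPSet S) :
    H.IsMPSet (Prod.snd '' S) := by
  rw [isMPSet_iff_forall_isMonophonic] at hS ⊢
  rintro x z r hr ⟨⟨i, x⟩, hi, rfl⟩ ⟨⟨l, z⟩, hl, rfl⟩ _ ⟨⟨j, y⟩, hj, rfl⟩ hyr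
  by_contra! hne
  have hxz := hr.1.ne_of_mem_support hyr hne.1
  have hnadj := hr.not_adj_of_mem_support hyr hne.1 hne.2
  obtain ⟨W, hW, hjW⟩ := hr.exists_top_boxProd_lift i j l fun _ _ =>
    ⟨fun h => hxz (congrArg Prod.snd h), by simp [boxProd_adj, hxz, hnadj]⟩
  rcases hS W hW hi hl (j, y) hj (hjW y hyr) with h | h
  exacts [hne.1 (congrArg Prod.snd h), hne.2 (congrArg Prod.snd h)]

theorem IsMPSet.ncard_le_max_of_top_boxProd [Finite α] [Finite β] (hH : H.Preconnected)
    (hS : ((⊤ : SimpleGraph α) □ H).IsMPSet S) : S.ncard ≤ max (Nat.card α) H.mpNum := by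
  by_cases hinj : S.InjOn Prod.snd
  · rw [← hinj.ncard_image]
    exact le_max_of_le_right hS.image_snd_of_top_boxProd.ncard_le_mpNum
  simp only [Set.InjOn, not_forall] at hinj
  obtain ⟨⟨i, a⟩, hi, ⟨j, a'⟩, hj, rfl, hne⟩ := hinj
  have hij : i ≠ j := fun h => hne (h ▸ rfl)
  have hfiber : S ⊆ Set.univ ×ˢ {a} :=
    fun p hp => ⟨trivial, hS.snd_eq_of_top_boxProd hH hij hi hj hp⟩
  calc S.ncard ≤ (Set.univ ×ˢ {a} : Set (α × β)).ncard := Set.ncard_le_ncard hfiber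
    _ = Nat.card α := by simp [Set.ncard_prod]
    _ ≤ _ := le_max_left _ _

theorem isClique_range_top_boxProd (b : β) :
    ((⊤ : SimpleGraph α) □ H).IsClique (Set.range fun i => (i, b)) := by
  rintro _ ⟨i, rfl⟩ _ ⟨j, rfl⟩ hne
  exact boxProd_adj_left.2 ((top_adj i j).2 fun h => hne (h ▸ rfl))

end BoxProd

end SimpleGraph

/-- If `H` is a finite connected graph and `n ≥ mp(H)`, then
`mp(Kₙ □ H) = n`. -/
theorem mpNum_completeGraph_boxProd {β : Type*} [Fintype β]
    (H : SimpleGraph β) (hH : H.Connected) (n : ℕ) (hn : H.mpNum ≤ n) :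
    ((⊤ : SimpleGraph (Fin n)) □ H).mpNum = n := by
  refine le_antisymm (csSup_le' ?_) ?_
  · rintro _ ⟨S, hS, rfl⟩
    simpa [hn] using hS.ncard_le_max_of_top_boxProd hH.preconnected
  · obtain ⟨b⟩ := hH.nonempty
    have hinj : Function.Injective fun i : Fin n => (i, b) := fun i j h => congrArg Prod.fst h
    simpa [Set.ncard_range_of_injective hinj] using
      (isClique_range_top_boxProd (α := Fin n) (H := H) b).isMPSet.ncard_le_mpNum
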